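/- Let n ≥ 1. The second moment of the complex equatorial stabilizer ensemble satisfies (1/|𝒜ₙ|) Σ_{A ∈ 𝒜ₙ} (φ^{eq}_A (φ^{eq}_A)†)^{⊗2} = (1/4ⁿ) ( I + Σ_{x,y ∈ {0,1}ⁿ} |x y⟩⟨y x| − Σ_{x ∈ {0,1}ⁿ} |x x⟩⟨x x| ), an identity of 4ⁿ×4ⁿ matrices indexed by pairs of bit strings. -/

import Mathlib

open Finset Matrix

/-- Bit strings of length `n`, with entries viewed as `0/1` integers via `Fin 2`. -/
abbrev Bits (n : ℕ) := Fin n → Fin 2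

open Classical in
/-- The index set `𝒜ₙ`: symmetric `n × n` matrices with diagonal entries in `{0,1,2,3}`
and off-diagonal entries in `{0,1}` (encoded inside `Fin 4`). -/
noncomputable def An (n : ℕ) : Finset (Matrix (Fin n) (Fin n) (Fin 4)) :=
  Finset.univ.filter fun A => (∀ i j, A i j = A j i) ∧ ∀ i j, i ≠ j → (A i j : ℕ) < 2

/-- The quadratic form `xᵀ A x`, computed in `ℤ` (here in `ℕ`, with `0/1` entries of `x`). -/
def quadA {n : ℕ} (A : Matrix (Fin n) (Fin n) (Fin 4)) (x : Bits n) : ℕ :=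
  ∑ i, ∑ j, (A i j : ℕ) * (x i : ℕ) * (x j : ℕ)

/-- The complex equatorial stabilizer state `φ^{eq}_A`. -/
noncomputable def phiEq {n : ℕ} (A : Matrix (Fin n) (Fin n) (Fin 4)) (x : Bits n) : ℂ :=
  Complex.I ^ quadA A x / (Real.sqrt (2 ^ n) : ℂ)

/-- The rank-one projector `φ φ†` onto a vector `φ`. -/
noncomputable def outer {ι : Type*} (φ : ι → ℂ) : Matrix ι ι ℂ :=
  Matrix.of fun x y => φ x * (starRingEnd ℂ) (φ y)

/-- The Kronecker (tensor) square of a matrix, indexed by pairs. -/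
def kron2 {ι : Type*} (M : Matrix ι ι ℂ) : Matrix (ι × ι) (ι × ι) ℂ :=
  Matrix.of fun p q => M p.1 q.1 * M p.2 q.2

/-!
Entry `((x, y), (w, s))` of `(φ_A φ_A†)^{⊗2}` is `4⁻ⁿ i^⟨A, G⟩`, where `G = x xᵀ + y yᵀ + 3 (w wᵀ + s sᵀ)`
(as `conj (i^k) = i^(3k)`). Parametrising `𝒜ₙ` by its diagonal `d ∈ (ℤ/4)ⁿ` and its strict upper
triangle `u ∈ (ℤ/2)^{n(n-1)/2}` gives `⟨A, G⟩ = ∑ dᵢ Gᵢᵢ + 2 ∑_{i<j} uᵢⱼ Gᵢⱼ`, so the average over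
`𝒜ₙ` factors into character sums over `ℤ/4` and `ℤ/2`: it is `4⁻ⁿ` if `4 ∣ Gᵢᵢ` for all `i` and
`2 ∣ Gᵢⱼ` for all `i < j`, and `0` otherwise.

The diagonal condition says `{wᵢ, sᵢ} = {xᵢ, yᵢ}` at every site. At two sites where `x` and `y`
differ, a flip of orientation between them would make `Gᵢⱼ ≡ (xᵢ + yᵢ)(xⱼ + yⱼ) = 1 (mod 2)`; hence
`(w, s)` is `(x, y)` or `(y, x)`, which are exactly the nonzero entries of `I + SWAP - ∑ |x x⟩⟨x x|`.
-/

theorem sum_fin_pow_eq_ite {R : Type*} [CommRing R] [IsDomain R] [DecidableEq R] {m : ℕ}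
    {z : R} (hz : z ^ m = 1) : ∑ a : Fin m, z ^ (a : ℕ) = if z = 1 then (m : R) else 0 := by
  rw [Fin.sum_univ_eq_sum_range (z ^ ·)]
  split_ifs with h
  · simp [h]
  · exact (mul_eq_zero.mp (by rw [geom_sum_mul, hz, sub_self])).resolve_right (sub_ne_zero.mpr h)

theorem sum_pi_fin_prod_pow_eq_ite {R ι : Type*} [CommRing R] [IsDomain R] [DecidableEq R]
    [Fintype ι] [DecidableEq ι] {m : ℕ} {z : ι → R} (hz : ∀ i, z i ^ m = 1) :
    ∑ d : ι → Fin m, ∏ i, z i ^ (d i : ℕ) =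
      if ∀ i, z i = 1 then (m : R) ^ Fintype.card ι else 0 := by
  rw [← Fintype.prod_sum (fun i (a : Fin m) => z i ^ (a : ℕ))]
  simp only [sum_fin_pow_eq_ite (hz _), Fintype.prod_ite_zero, prod_const, card_univ]

theorem sum_sum_eq_sum_diag_add_sum_lt {ι M : Type*} [Fintype ι] [LinearOrder ι]
    [AddCommMonoid M] (f : ι → ι → M) :
    ∑ i, ∑ j, f i j =
      ∑ i, f i i + ∑ p : {p : ι × ι // p.1 < p.2}, (f p.1.1 p.1.2 + f p.1.2 p.1.1) := by
  have hsplit : ∀ i j, f i j = (if i = j then f i j else 0) +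
      ((if i < j then f i j else 0) + (if j < i then f i j else 0)) := by
    intro i j
    rcases lt_trichotomy i j with h | rfl | h
    · simp [h, h.ne, h.not_gt]
    · simp
    · simp [h, h.ne', h.not_gt]
  have hlt : ∀ g : ι → ι → M, ∑ i, ∑ j, (if i < j then g i j else 0) =
      ∑ p : {p : ι × ι // p.1 < p.2}, g p.1.1 p.1.2 := by
    intro g
    rw [← Fintype.sum_prod_type' (f := fun i j => if i < j then g i j else 0), ← sum_filter]
    exact sum_subtype _ (by simp) _
  rw [sum_congr rfl fun i _ => sum_congr rfl fun j _ => hsplit i j]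
  simp only [sum_add_distrib, sum_ite_eq, mem_univ, if_true, hlt]
  rw [sum_comm (f := fun i j => if j < i then f i j else 0), hlt (fun i j => f j i)]

theorem Complex.I_pow_eq_one_iff (k : ℕ) : Complex.I ^ k = 1 ↔ 4 ∣ k :=
  Complex.isPrimitiveRoot_I.pow_eq_one_iff_dvd k

theorem Matrix.one_add_sum_single_swap_sub_sum_single_diag_apply {ι R : Type*} [Fintype ι]
    [DecidableEq ι] [Ring R] (x y w s : ι) :
    ((1 : Matrix (ι × ι) (ι × ι) R) + (∑ a : ι, ∑ b : ι, Matrix.single (a, b) (b, a) (1 : R))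
        - ∑ a : ι, Matrix.single (a, a) (a, a) (1 : R)) (x, y) (w, s) =
      if (w = x ∧ s = y) ∨ (w = y ∧ s = x) then 1 else 0 := by
  simp only [Matrix.sub_apply, Matrix.add_apply, Matrix.one_apply, Matrix.sum_apply,
    Matrix.single_apply, Prod.mk.injEq, ite_and, sum_ite_irrel, sum_ite_eq', mem_univ, if_true,
    sum_const_zero]
  split_ifs <;> simp_all [eq_comm]

namespace EquatorialStabilizer

abbrev StrictUpper (n : ℕ) := {p : Fin n × Fin n // p.1 < p.2}

variable {n : ℕ}

def ofDiagUpper (d : Fin n → Fin 4) (u : StrictUpper n → Fin 2) :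
    Matrix (Fin n) (Fin n) (Fin 4) :=
  Matrix.of fun i j =>
    if h : i < j then Fin.castLE (by norm_num) (u ⟨(i, j), h⟩)
    else if h' : j < i then Fin.castLE (by norm_num) (u ⟨(j, i), h'⟩)
    else d i

def diagUpper (A : Matrix (Fin n) (Fin n) (Fin 4)) :
    (Fin n → Fin 4) × (StrictUpper n → Fin 2) :=
  (fun i => A i i, fun p => ⟨(A p.1.1 p.1.2 : ℕ) % 2, Nat.mod_lt _ two_pos⟩)

section ofDiagUpper

variable (d : Fin n → Fin 4) (u : StrictUpper n → Fin 2)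

lemma ofDiagUpper_self (i : Fin n) : ofDiagUpper d u i i = d i := by
  simp [ofDiagUpper]

lemma ofDiagUpper_of_lt {i j : Fin n} (h : i < j) :
    (ofDiagUpper d u i j : ℕ) = u ⟨(i, j), h⟩ := by
  simp [ofDiagUpper, h]

lemma ofDiagUpper_of_gt {i j : Fin n} (h : j < i) :
    (ofDiagUpper d u i j : ℕ) = u ⟨(j, i), h⟩ := by
  simp [ofDiagUpper, h, h.not_gt]

lemma ofDiagUpper_mem_An : ofDiagUpper d u ∈ An n := by
  simp only [An, mem_filter, mem_univ, true_and]
  refine ⟨fun i j => ?_, fun i j hij => ?_⟩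
  · rcases lt_trichotomy i j with h | rfl | h
    · exact Fin.ext ((ofDiagUpper_of_lt d u h).trans (ofDiagUpper_of_gt d u h).symm)
    · rfl
    · exact Fin.ext ((ofDiagUpper_of_gt d u h).trans (ofDiagUpper_of_lt d u h).symm)
  · rcases hij.lt_or_gt with h | h
    · rw [ofDiagUpper_of_lt d u h]; exact (u _).isLt
    · rw [ofDiagUpper_of_gt d u h]; exact (u _).isLt

lemma diagUpper_ofDiagUpper : diagUpper (ofDiagUpper d u) = (d, u) := by
  refine Prod.ext (funext fun i => ofDiagUpper_self d u i) (funext fun p => Fin.ext ?_)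
  simp [diagUpper, ofDiagUpper_of_lt d u p.2, Nat.mod_eq_of_lt (u p).isLt]

lemma sum_ofDiagUpper_mul (G : Fin n → Fin n → ℕ) (hG : ∀ i j, G i j = G j i) :
    ∑ i, ∑ j, (ofDiagUpper d u i j : ℕ) * G i j =
      ∑ i, (d i : ℕ) * G i i + ∑ p : StrictUpper n, (u p : ℕ) * (2 * G p.1.1 p.1.2) := by
  rw [sum_sum_eq_sum_diag_add_sum_lt]
  congr 1
  · simp only [ofDiagUpper_self]
  · refine sum_congr rfl fun p _ => ?_
    rw [ofDiagUpper_of_lt d u p.2, ofDiagUpper_of_gt d u p.2, hG p.1.2]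
    ring

end ofDiagUpper

lemma ofDiagUpper_diagUpper {A : Matrix (Fin n) (Fin n) (Fin 4)} (hA : A ∈ An n) :
    ofDiagUpper (diagUpper A).1 (diagUpper A).2 = A := by
  simp only [An, mem_filter, mem_univ, true_and] at hA
  obtain ⟨hsymm, hoff⟩ := hA
  ext i j
  rcases lt_trichotomy i j with h | rfl | h
  · rw [ofDiagUpper_of_lt _ _ h]; exact Nat.mod_eq_of_lt (hoff i j h.ne)
  · rw [ofDiagUpper_self]; rfl
  · rw [ofDiagUpper_of_gt _ _ h, hsymm i j]; exact Nat.mod_eq_of_lt (hoff j i h.ne)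

lemma sum_An_eq_sum_diag_upper {M : Type*} [AddCommMonoid M]
    (F : Matrix (Fin n) (Fin n) (Fin 4) → M) :
    ∑ A ∈ An n, F A = ∑ d : Fin n → Fin 4, ∑ u : StrictUpper n → Fin 2, F (ofDiagUpper d u) := by
  rw [← Fintype.sum_prod_type']
  exact sum_nbij' diagUpper (fun du => ofDiagUpper du.1 du.2)
    (fun _ _ => mem_univ _) (fun du _ => ofDiagUpper_mem_An du.1 du.2)
    (fun _ hA => ofDiagUpper_diagUpper hA) (fun du _ => diagUpper_ofDiagUpper du.1 du.2)
    (fun _ hA => by rw [ofDiagUpper_diagUpper hA])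

theorem sum_An_I_pow (G : Fin n → Fin n → ℕ) (hG : ∀ i j, G i j = G j i) :
    ∑ A ∈ An n, Complex.I ^ (∑ i, ∑ j, (A i j : ℕ) * G i j) =
      if (∀ i, 4 ∣ G i i) ∧ ∀ i j, i < j → 2 ∣ G i j
      then (4 : ℂ) ^ n * 2 ^ Fintype.card (StrictUpper n) else 0 := by
  have hfactor : ∀ d u, Complex.I ^ (∑ i, ∑ j, (ofDiagUpper d u i j : ℕ) * G i j) =
      (∏ i, (Complex.I ^ G i i) ^ (d i : ℕ)) *
        ∏ p : StrictUpper n, (Complex.I ^ (2 * G p.1.1 p.1.2)) ^ (u p : ℕ) := by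
    intro d u
    rw [sum_ofDiagUpper_mul d u G hG, pow_add]
    congr 1 <;> rw [← prod_pow_eq_pow_sum] <;>
      exact prod_congr rfl fun _ _ => by rw [← pow_mul, mul_comm]
  have hpair : ∀ g : ℕ, Complex.I ^ (2 * g) = 1 ↔ 2 ∣ g := fun g => by
    rw [Complex.I_pow_eq_one_iff]; omega
  rw [sum_An_eq_sum_diag_upper]
  simp only [hfactor, ← sum_mul_sum]
  rw [sum_pi_fin_prod_pow_eq_ite fun i => by
      rw [← pow_mul, Complex.I_pow_eq_one_iff]; exact ⟨G i i, by ring⟩,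
    sum_pi_fin_prod_pow_eq_ite fun p => by
      rw [← pow_mul, Complex.I_pow_eq_one_iff]; exact ⟨G p.1.1 p.1.2, by ring⟩]
  simp only [Complex.I_pow_eq_one_iff, hpair, Subtype.forall, Prod.forall, Fintype.card_fin,
    Nat.cast_ofNat, ite_zero_mul_ite_zero]

lemma card_An : ((An n).card : ℂ) = 4 ^ n * 2 ^ Fintype.card (StrictUpper n) := by
  simpa using sum_An_I_pow (n := n) (fun _ _ => 0) fun _ _ => rfl

def phaseGram (x y w s : Bits n) (i j : Fin n) : ℕ :=
  (x i : ℕ) * x j + (y i : ℕ) * y j + 3 * ((w i : ℕ) * w j + (s i : ℕ) * s j)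

lemma phaseGram_comm (x y w s : Bits n) (i j : Fin n) :
    phaseGram x y w s i j = phaseGram x y w s j i := by
  simp only [phaseGram]; ring

lemma phaseGram_swap (x y w s : Bits n) : phaseGram x y w s = phaseGram x y s w := by
  ext i j; simp only [phaseGram]; ring

lemma bit_pair_eq_or_swap_of_four_dvd (a b c e : Fin 2)
    (h : 4 ∣ (a : ℕ) * a + (b : ℕ) * b + 3 * ((c : ℕ) * c + (e : ℕ) * e)) :
    (c = a ∧ e = b) ∨ (c = b ∧ e = a) := by
  revert a b c e; decide

lemma bit_pair_eq_of_two_dvd (a b a' b' c' e' : Fin 2) (hab : a ≠ b)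
    (h' : 4 ∣ (a' : ℕ) * a' + (b' : ℕ) * b' + 3 * ((c' : ℕ) * c' + (e' : ℕ) * e'))
    (h : 2 ∣ (a : ℕ) * a' + (b : ℕ) * b' + 3 * ((a : ℕ) * c' + (b : ℕ) * e')) :
    c' = a' ∧ e' = b' := by
  revert a b a' b' c' e'; decide

lemma eq_of_phaseGram_dvd {x y w s : Bits n} (hdiag : ∀ i, 4 ∣ phaseGram x y w s i i)
    (hoff : ∀ i j, i < j → 2 ∣ phaseGram x y w s i j) {i : Fin n} (hi : x i ≠ y i)
    (hw : w i = x i) (hs : s i = y i) : w = x ∧ s = y := by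
  have hsite : ∀ j, w j = x j ∧ s j = y j := by
    intro j
    by_cases hij : i = j
    · exact hij ▸ ⟨hw, hs⟩
    · have hpair : 2 ∣ phaseGram x y w s i j :=
        (Ne.lt_or_gt hij).elim (hoff i j) fun h => phaseGram_comm x y w s i j ▸ hoff j i h
      rw [phaseGram, hw, hs] at hpair
      exact bit_pair_eq_of_two_dvd _ _ _ _ _ _ hi (hdiag j) hpair
  exact ⟨funext fun j => (hsite j).1, funext fun j => (hsite j).2⟩

theorem phaseGram_dvd_iff (x y w s : Bits n) :
    ((∀ i, 4 ∣ phaseGram x y w s i i) ∧ ∀ i j, i < j → 2 ∣ phaseGram x y w s i j) ↔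
      (w = x ∧ s = y) ∨ (w = y ∧ s = x) := by
  constructor
  · rintro ⟨hdiag, hoff⟩
    have hsite := fun i => bit_pair_eq_or_swap_of_four_dvd _ _ _ _ (hdiag i)
    by_cases hxy : x = y
    · subst hxy
      left
      constructor <;> funext i <;> rcases hsite i with h | h <;> simp only [h]
    · obtain ⟨i, hi⟩ := Function.ne_iff.mp hxy
      rcases hsite i with ⟨hw, hs⟩ | ⟨hw, hs⟩
      · exact Or.inl (eq_of_phaseGram_dvd hdiag hoff hi hw hs)
      · rw [phaseGram_swap] at hdiag hoff
        exact Or.inr (eq_of_phaseGram_dvd hdiag hoff hi hs hw).symm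
  · intro h
    have h4 : ∀ i j, 4 ∣ phaseGram x y w s i j := by
      rcases h with ⟨rfl, rfl⟩ | ⟨rfl, rfl⟩ <;> intro i j <;>
        exact ⟨w i * w j + s i * s j, by simp only [phaseGram]; ring⟩
    exact ⟨fun i => h4 i i, fun i j _ => dvd_trans (by norm_num) (h4 i j)⟩

lemma phiEq_mul_conj (A : Matrix (Fin n) (Fin n) (Fin 4)) (x w : Bits n) :
    phiEq A x * starRingEnd ℂ (phiEq A w) = Complex.I ^ (quadA A x + 3 * quadA A w) / 2 ^ n := by
  have hsqrt : ((Real.sqrt (2 ^ n) : ℝ) : ℂ) * (Real.sqrt (2 ^ n) : ℝ) = 2 ^ n := by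
    rw [← Complex.ofReal_mul, Real.mul_self_sqrt (by positivity)]; push_cast; rfl
  simp only [phiEq, map_div₀, map_pow, Complex.conj_I, Complex.conj_ofReal, div_mul_div_comm,
    hsqrt, pow_add, pow_mul, Complex.I_pow_three]

lemma quadA_add_quadA_add_three_mul (A : Matrix (Fin n) (Fin n) (Fin 4)) (x y w s : Bits n) :
    quadA A x + quadA A y + 3 * (quadA A w + quadA A s) =
      ∑ i, ∑ j, (A i j : ℕ) * phaseGram x y w s i j := by
  simp only [quadA, phaseGram, mul_sum, ← sum_add_distrib]
  congr! 2; ring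

lemma kron2_outer_phiEq_apply (A : Matrix (Fin n) (Fin n) (Fin 4)) (x y w s : Bits n) :
    kron2 (outer (phiEq A)) (x, y) (w, s) =
      Complex.I ^ (∑ i, ∑ j, (A i j : ℕ) * phaseGram x y w s i j) / 4 ^ n := by
  rw [← quadA_add_quadA_add_three_mul]
  simp only [kron2, outer, Matrix.of_apply, phiEq_mul_conj]
  rw [show (4 : ℂ) ^ n = 2 ^ n * 2 ^ n by rw [← mul_pow]; norm_num]
  ring

end EquatorialStabilizer

open EquatorialStabilizer in
theorem espovm_second_moment (n : ℕ) :
    (((An n).card : ℂ))⁻¹ • ∑ A ∈ An n, kron2 (outer (phiEq A)) =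
      ((4 : ℂ) ^ n)⁻¹ •
        ((1 : Matrix (Bits n × Bits n) (Bits n × Bits n) ℂ)
          + (∑ x : Bits n, ∑ y : Bits n, Matrix.single (x, y) (y, x) (1 : ℂ))
          - ∑ x : Bits n, Matrix.single (x, x) (x, x) (1 : ℂ)) := by
  ext ⟨x, y⟩ ⟨w, s⟩
  simp only [Matrix.smul_apply, Matrix.sum_apply, kron2_outer_phiEq_apply,
    Matrix.one_add_sum_single_swap_sub_sum_single_diag_apply, smul_eq_mul]
  rw [← sum_div, sum_An_I_pow _ (phaseGram_comm x y w s), card_An]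
  simp only [phaseGram_dvd_iff]
  split_ifs
  · field_simp
  · simp
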